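/- Let m be a positive integer, D the m×m cyclic-shift permutation matrix, B = Dᵗ, and U(r) the m×m matrix whose r-th row has all entries 1 and all other entries 0. Then det(D − I + U(r)) = (−1)^{m−1} m for every r with 1 ≤ r ≤ m. -/

import Mathlib

/-!
Every column of `D - I` sums to zero, so adding all other rows to row `r` turns `D - I + U(r)`
into `D - I` with row `r` replaced by the all-ones row, without changing the determinant.
Since `D - I` is invariant under the cyclic relabelling `i ↦ i + c`, we may take `r` to be the
last index. Multiplying on the right by the upper triangular all-ones matrix (determinant `1`)
then produces a lower triangular matrix with diagonal `-1, …, -1, m`.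
-/

open Matrix

variable {R : Type*} [CommRing R]

namespace Matrix

theorem det_add_ones_in_row_of_sum_col_eq_zero {n : Type*} [Fintype n] [DecidableEq n]
    (A : Matrix n n R) (hA : ∀ j, ∑ i, A i j = 0) (r : n) :
    (A + of fun i _ => if i = r then 1 else 0).det = (A.updateRow r 1).det := by
  set M := A + of fun i _ => if i = r then (1 : R) else 0
  have hsum : ∑ k, (1 : R) • M k = 1 := by
    ext j
    rw [Finset.sum_apply]
    simp [M, Finset.sum_add_distrib, hA]
  have hrow : M.updateRow r 1 = A.updateRow r 1 := by
    ext i j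
    by_cases hi : i = r <;> simp [M, updateRow_apply, hi]
  rw [← hrow, ← hsum, det_updateRow_sum, one_smul]

theorem det_updateRow_one_eq_of_translation_invariant {G : Type*} [AddGroup G] [Fintype G]
    [DecidableEq G] (A : Matrix G G R) (hA : ∀ i j c, A (i + c) (j + c) = A i j) (r r' : G) :
    (A.updateRow r 1).det = (A.updateRow r' 1).det := by
  let e := Equiv.addRight (-r' + r)
  have hAe : A.submatrix e e = A := by ext i j; exact hA i j _
  have her : e.symm r = r' := by
    show r + -(-r' + r) = r'
    rw [neg_add_rev, neg_neg, add_neg_cancel_left]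
  rw [← det_submatrix_equiv_self e, submatrix_updateRow_equiv, hAe, her]
  rfl

def cyclicShift (m : ℕ) [NeZero m] : Matrix (Fin m) (Fin m) R :=
  of fun i j => if j = i + 1 then 1 else 0

def upperOnes (n : ℕ) : Matrix (Fin n) (Fin n) R :=
  of fun k j => if k ≤ j then 1 else 0

theorem det_upperOnes (n : ℕ) : (upperOnes n : Matrix (Fin n) (Fin n) R).det = 1 := by
  have h : (upperOnes n : Matrix (Fin n) (Fin n) R).IsUpperTriangular := fun i j hji =>
    if_neg (not_le.mpr hji)
  rw [det_of_isUpperTriangular h]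
  simp [upperOnes]

section cyclicShift

variable (m : ℕ) [NeZero m]

theorem cyclicShift_sub_one_apply_add_add (i j c : Fin m) :
    (cyclicShift m - 1 : Matrix (Fin m) (Fin m) R) (i + c) (j + c) =
      (cyclicShift m - 1 : Matrix (Fin m) (Fin m) R) i j := by
  simp [cyclicShift, one_apply, add_right_comm i c 1]

theorem sum_cyclicShift_sub_one_apply (j : Fin m) :
    ∑ i, (cyclicShift m - 1 : Matrix (Fin m) (Fin m) R) i j = 0 := by
  have hpred (i : Fin m) : j = i + 1 ↔ i = j - 1 := by rw [eq_sub_iff_add_eq, eq_comm]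
  simp [cyclicShift, one_apply, Finset.sum_sub_distrib, hpred]

end cyclicShift

theorem det_updateRow_last_cyclicShift_sub_one (n : ℕ) :
    ((cyclicShift (n + 1) - 1 : Matrix (Fin (n + 1)) (Fin (n + 1)) R).updateRow
      (Fin.last n) 1).det = (-1) ^ n * (n + 1) := by
  set L : Matrix (Fin (n + 1)) (Fin (n + 1)) R :=
    (cyclicShift (n + 1) - 1 : Matrix (Fin (n + 1)) (Fin (n + 1)) R).updateRow (Fin.last n) 1 *
      upperOnes (n + 1) with hL
  have hL_last (j : Fin (n + 1)) : L (Fin.last n) j = j + 1 := by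
    simp [hL, mul_apply, upperOnes, Finset.sum_boole, Finset.filter_ge_eq_Iic]
  have hL_ne_last {i : Fin (n + 1)} (hi : i ≠ Fin.last n) (j : Fin (n + 1)) :
      L i j = if j = i then -1 else 0 := by
    have hsucc : ((i + 1 : Fin (n + 1)) : ℕ) = i + 1 :=
      Fin.val_add_one_of_lt (Fin.lt_last_iff_ne_last.mpr hi)
    simp only [hL, mul_apply, updateRow_ne hi, sub_apply, cyclicShift, upperOnes, of_apply,
      one_apply, sub_mul, ite_mul, one_mul, zero_mul, Finset.sum_sub_distrib, Finset.sum_ite_eq,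
      Finset.sum_ite_eq', Finset.mem_univ, if_true]
    simp only [Fin.le_iff_val_le_val, hsucc, Fin.ext_iff]
    split_ifs <;> first | omega | norm_num
  have hL_lower : L.IsLowerTriangular := fun i j (hij : i < j) => by
    simp [hL_ne_last (hij.trans_le (Fin.le_last _)).ne, hij.ne']
  have hdet : L.det = (-1) ^ n * (n + 1) := by
    rw [det_of_isLowerTriangular L hL_lower, Fin.prod_univ_castSucc]
    simp [hL_last, hL_ne_last (Fin.castSucc_lt_last _).ne]
  rwa [hL, det_mul, det_upperOnes, mul_one] at hdet

end Matrix

/-- `det (D − I + U(r)) = (−1)^(m−1) m` where `D` is the m×m cyclic shift matrix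
and `U(r)` has all entries `1` in row `r` and `0` elsewhere. -/
theorem stmt_2 (m : ℕ) [NeZero m] (r : Fin m)
    (D : Matrix (Fin m) (Fin m) ℚ)
    (hD : D = Matrix.of fun i j => if j = i + 1 then 1 else 0)
    (U : Matrix (Fin m) (Fin m) ℚ)
    (hU : U = Matrix.of fun i _ => if i = r then 1 else 0) :
    (D - 1 + U).det = (-1) ^ (m - 1) * m := by
  obtain ⟨n, rfl⟩ := Nat.exists_eq_add_one_of_ne_zero (NeZero.ne m)
  have hD' : D = cyclicShift (n + 1) := hD
  rw [hD', hU, det_add_ones_in_row_of_sum_col_eq_zero _ (sum_cyclicShift_sub_one_apply _),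
    det_updateRow_one_eq_of_translation_invariant _ (cyclicShift_sub_one_apply_add_add _) r
      (Fin.last n),
    det_updateRow_last_cyclicShift_sub_one, Nat.add_sub_cancel, Nat.cast_add_one]
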